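/- Every bounded pre-tiling space is totally bounded. Consequently, every bounded complete pre-tiling space is compact, and every bounded pre-tiling space is separable. -/
import Mathlib

open scoped ENNReal

/-- An `N`-tiling set: a covering structure `P` on `X`, a map from `ℕ` or `ℤ`
(encoded as a subset `dom` of `ℤ` equal to `{n | 0 ≤ n}` or to all of `ℤ`) to the
coverings of `X`, satisfying the subdivision conditions (S1) and (S2). -/
structure TilingSet (X : Type*) (N : ℕ) where
  /-- The domain of the covering structure: either `ℕ` (as `{n : ℤ | 0 ≤ n}`) or `ℤ`. -/
  dom : Set ℤ
  dom_eq : dom = Set.univ ∨ dom = {n : ℤ | 0 ≤ n}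
  /-- The covering structure. -/
  P : ℤ → Set (Set X)
  /-- For each `n ∈ dom`, `P n` is a covering of `X`. -/
  covers : ∀ n ∈ dom, ⋃₀ P n = Set.univ
  /-- (S1): each tile of level `n` is subdivided into exactly `N^(m-n)` tiles of
  level `m > n`, whose union is the tile. -/
  S1 : ∀ n ∈ dom, ∀ m ∈ dom, n < m → ∀ A ∈ P n,
    {B | B ∈ P m ∧ B ⊆ A}.encard = (N ^ (m - n).toNat : ℕ) ∧
    A = ⋃₀ {B | B ∈ P m ∧ B ⊆ A}
  /-- (S2): any two tiles of the same level are contained in a common tile. -/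
  S2 : ∀ n ∈ dom, ∀ A ∈ P n, ∀ B ∈ P n, ∃ m ∈ dom, ∃ C ∈ P m, A ∪ B ⊆ C


/-- A subset `T` of `X` is a tile of the tiling set. -/
def TilingSet.IsTile {X : Type*} {N : ℕ} (T : TilingSet X N) (A : Set X) : Prop :=
  ∃ n ∈ T.dom, A ∈ T.P n

/-- An `(N, s)`-pre-tiling space: an `N`-tiling set on a metric space `X` whose level-`n`
tiles have diameter comparable to `s^n` (T1) and contain open balls of radius
comparable to `s^n` (T2). -/
structure PreTilingSpace (X : Type*) [MetricSpace X] (N : ℕ) (s : ℝ)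
    extends TilingSet X N where
  /-- (T1): `D₁ ≤ δ(A)/s^n ≤ D₂` for every tile `A` of level `n`. -/
  T1 : ∃ D₁ > (0:ℝ), ∃ D₂ > (0:ℝ), ∀ n ∈ dom, ∀ A ∈ P n,
    D₁ ≤ Metric.diam A / s ^ n ∧ Metric.diam A / s ^ n ≤ D₂
  /-- (T2): every tile `A` of level `n` contains an open ball of radius `E s^n`
  centered at a point of `A`, for a uniform constant `E > 0`. -/
  T2 : ∃ E > (0:ℝ), ∀ n ∈ dom, ∀ A ∈ P n, ∃ p ∈ A, Metric.ball p (E * s ^ n) ⊆ A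

theorem stmt11 {X : Type*} [MetricSpace X] {N : ℕ} {s : ℝ}
    (hs0 : 0 < s) (hs1 : s < 1) (T : PreTilingSpace X N s)
    (hbdd : Bornology.IsBounded (Set.univ : Set X)) :
    TotallyBounded (Set.univ : Set X) ∧
    (CompleteSpace X → CompactSpace X) ∧
    TopologicalSpace.SeparableSpace X := by
  have htb : TotallyBounded (Set.univ : Set X) := by
      classical
      by_contra htb'
      rw [Metric.totallyBounded_iff] at htb'
      push_neg at htb'
      obtain ⟨ε, hε, hnet⟩ := htb'
      have hstep : ∀ t : Finset X, ∃ x : X, ∀ y ∈ t, ε ≤ dist y x := by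
        intro t
        by_contra h
        push_neg at h
        refine hnet (↑t) t.finite_toSet ?_
        intro x _
        obtain ⟨y, hy, hxy⟩ := h x
        exact Set.mem_biUnion hy (by simpa [Metric.mem_ball, dist_comm] using hxy)
      choose f hf using hstep
      let g : ℕ → Finset X := fun n =>
        Nat.rec (motive := fun _ => Finset X) ∅ (fun _ t => insert (f t) t) n
      let u : ℕ → X := fun n => f (g n)
      have hgs : ∀ n, g (n + 1) = insert (u n) (g n) := fun n => rfl
      have hmem : ∀ i n, i < n → u i ∈ g n := by
        intro i n hin
        induction n with
        | zero => omega
        | succ n ih =>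
          rw [hgs n]
          rcases Nat.lt_succ_iff_lt_or_eq.mp hin with h | h
          · exact Finset.mem_insert_of_mem (ih h)
          · subst h; exact Finset.mem_insert_self _ _
      have hsep : ∀ i j : ℕ, i < j → ε ≤ dist (u i) (u j) := fun i j hij =>
        hf (g j) (u i) (hmem i j hij)
      -- tiling constants
      obtain ⟨D₁, hD₁, D₂, hD₂, hT1⟩ := T.T1
      have hdomnn : ∀ n : ℤ, 0 ≤ n → n ∈ T.dom := by
        rcases T.dom_eq with h | h <;> intro n hn <;> simp [h, hn]
      have h0dom : (0 : ℤ) ∈ T.dom := hdomnn 0 le_rfl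
      have hspos : ∀ n : ℤ, (0 : ℝ) < s ^ n := fun n => zpow_pos hs0 n
      have tile_lb : ∀ n ∈ T.dom, ∀ A ∈ T.P n, D₁ * s ^ n ≤ Metric.diam A := fun n hn A hA =>
        (le_div_iff₀ (hspos n)).mp (hT1 n hn A hA).1
      have tile_ub : ∀ n ∈ T.dom, ∀ A ∈ T.P n, Metric.diam A ≤ D₂ * s ^ n := fun n hn A hA =>
        (div_le_iff₀ (hspos n)).mp (hT1 n hn A hA).2
      -- chain of tiles containing initial segments of u
      have chain : ∀ j : ℕ, ∃ m ∈ T.dom, ∃ C ∈ T.P m, ∀ i ≤ j, u i ∈ C := by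
        intro j
        induction j with
        | zero =>
          have hx : u 0 ∈ ⋃₀ T.P 0 := by rw [T.covers 0 h0dom]; trivial
          obtain ⟨A, hA, hu⟩ := hx
          exact ⟨0, h0dom, A, hA, fun i hi => by rw [Nat.le_zero.mp hi]; exact hu⟩
        | succ j ih =>
          obtain ⟨m, hm, C, hC, hall⟩ := ih
          have hx : u (j + 1) ∈ ⋃₀ T.P m := by rw [T.covers m hm]; trivial
          obtain ⟨D, hD, hu⟩ := hx
          obtain ⟨m', hm', C', hC', hsub⟩ := T.S2 m hm C hC D hD
          refine ⟨m', hm', C', hC', fun i hi => ?_⟩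
          rcases eq_or_lt_of_le hi with h | h
          · rw [h]; exact hsub (Or.inr hu)
          · exact hsub (Or.inl (hall i (Nat.lt_succ_iff.mp h)))
      -- choose scales
      set Δ : ℝ := Metric.diam (Set.univ : Set X) with hΔdef
      have hΔ0 : 0 ≤ Δ := Metric.diam_nonneg
      obtain ⟨k, hk⟩ := exists_pow_lt_of_lt_one (div_pos hε hD₂) hs1
      have hk' : D₂ * s ^ (k : ℤ) < ε := by
        rw [zpow_natCast]
        calc D₂ * s ^ k < D₂ * (ε / D₂) := by
              exact mul_lt_mul_of_pos_left hk hD₂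
          _ = ε := by field_simp
      obtain ⟨L, hL⟩ := exists_pow_lt_of_lt_one (div_pos hD₁ (by linarith : (0:ℝ) < Δ + 1)) hs1
      have hL' : Δ * s ^ L < D₁ := by
        have h1 : (Δ + 1) * s ^ L < D₁ := by
          rw [mul_comm]
          exact (lt_div_iff₀ (by linarith)).mp hL
        nlinarith [pow_pos hs0 L]
      set j := (N + 1) ^ (k + L) with hjdef
      have hj1 : 1 ≤ j := Nat.one_le_pow _ _ (Nat.succ_pos N)
      obtain ⟨m, hm, C, hC, hall⟩ := chain j
      have hCbd : Bornology.IsBounded C := hbdd.subset (Set.subset_univ C)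
      have hdiamC_ub : Metric.diam C ≤ Δ := Metric.diam_mono (Set.subset_univ C) hbdd
      have hεC : ε ≤ Metric.diam C :=
        le_trans (hsep 0 1 one_pos)
          (Metric.dist_le_diam_of_mem hCbd (hall 0 (Nat.zero_le _)) (hall 1 hj1))
      have hmk : m < (k : ℤ) := by
        by_contra h
        push_neg at h
        have h1 : s ^ m ≤ s ^ (k : ℤ) := zpow_le_zpow_right_of_le_one₀ hs0 hs1.le h
        have h2 := tile_ub m hm C hC
        nlinarith
      have hmL : -(L : ℤ) < m := by
        by_contra h
        push_neg at h
        have h1 : s ^ (-(L : ℤ)) ≤ s ^ m := zpow_le_zpow_right_of_le_one₀ hs0 hs1.le h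
        have h2 := tile_lb m hm C hC
        have h3 : s ^ (-(L : ℤ)) = (s ^ L)⁻¹ := by
          rw [zpow_neg, zpow_natCast]
        have h4 : D₁ * (s ^ L)⁻¹ ≤ Δ := by
          rw [← h3]
          calc D₁ * s ^ (-(L:ℤ)) ≤ D₁ * s ^ m := by
                exact mul_le_mul_of_nonneg_left h1 hD₁.le
            _ ≤ Metric.diam C := h2
            _ ≤ Δ := hdiamC_ub
        have h5 : D₁ ≤ Δ * s ^ L := by
          have hsL : (0:ℝ) < s ^ L := pow_pos hs0 L
          rw [mul_inv_le_iff₀ hsL] at h4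
          linarith [h4]
        linarith
      have hkdom : (k : ℤ) ∈ T.dom := hdomnn k (Int.ofNat_nonneg k)
      obtain ⟨hcard, hunion⟩ := T.S1 m hm (k : ℤ) hkdom hmk C hC
      set S : Set (Set X) := {B | B ∈ T.P (k : ℤ) ∧ B ⊆ C} with hSdef
      have hchoice : ∀ i : Fin (j + 1), ∃ B ∈ S, u i ∈ B := by
        intro i
        have h1 : u i ∈ ⋃₀ S := by
          rw [← hunion]; exact hall i (Nat.lt_succ_iff.mp i.2)
        obtain ⟨B, hB, hu⟩ := h1
        exact ⟨B, hB, hu⟩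
      choose B hB hu using hchoice
      have hinj : Function.Injective fun i : Fin (j + 1) => (⟨B i, hB i⟩ : S) := by
        intro i i' h
        by_contra hne
        have hBB : B i = B i' := congrArg Subtype.val h
        have key : ∀ a b : Fin (j + 1), (a : ℕ) < (b : ℕ) → B a = B b → False := by
          intro a b hab hE
          have h1 : ε ≤ dist (u a) (u b) := hsep a b hab
          have h2 : dist (u a) (u b) ≤ Metric.diam (B a) :=
            Metric.dist_le_diam_of_mem (hbdd.subset (Set.subset_univ _)) (hu a)
              (hE ▸ hu b)
          have h3 : Metric.diam (B a) ≤ D₂ * s ^ (k : ℤ) :=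
            tile_ub (k : ℤ) hkdom (B a) (hB a).1
          linarith
        rcases lt_trichotomy (i : ℕ) (i' : ℕ) with hlt | heq | hgt
        · exact key i i' hlt hBB
        · exact hne (Fin.ext heq)
        · exact key i' i hgt hBB.symm
      have hSfin : S.Finite := Set.finite_of_encard_eq_coe hcard
      haveI := hSfin.to_subtype
      have hcount : j + 1 ≤ N ^ ((k : ℤ) - m).toNat := by
        have h1 : Nat.card (Fin (j + 1)) ≤ Nat.card S :=
          Nat.card_le_card_of_injective _ hinj
        have h2 : Nat.card (Fin (j + 1)) = j + 1 := by simp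
        have h3 : Nat.card S = N ^ ((k : ℤ) - m).toNat := by
          rw [Nat.card_coe_set_eq, Set.ncard_def, hcard]
          exact ENat.toNat_coe _
        omega
      have hexp : ((k : ℤ) - m).toNat ≤ k + L := by omega
      have hfinal : N ^ ((k : ℤ) - m).toNat ≤ j := by
        calc N ^ ((k : ℤ) - m).toNat ≤ (N + 1) ^ ((k : ℤ) - m).toNat :=
              Nat.pow_le_pow_left (Nat.le_succ N) _
          _ ≤ (N + 1) ^ (k + L) := Nat.pow_le_pow_right (Nat.succ_pos N) hexp
      omega
  refine ⟨htb, fun hc => ?_, ?_⟩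
  · exact isCompact_univ_iff.mp (TotallyBounded.isCompact_of_isClosed htb isClosed_univ)
  · exact TopologicalSpace.isSeparable_univ_iff.mp htb.isSeparable
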